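/- arXiv:1507.03917 — 2 statements merged into one kernel-verified Lean document; each statement's English description precedes it below -/
import Mathlib

section
/- Let λ ∈ [−1,1], let k ≥ 1, and let J = J(λ,k) be the k×k Jordan block with eigenvalue λ. Then for every n ≥ 1, the maximum absolute row-sum norm of T_n(J) satisfies ‖T_n(J)‖₁ ≤ 3·n^{2k−2}. -/
/-- The `n`-th Chebyshev polynomial of the first kind, as a real polynomial. -/
noncomputable def chebT (n : ℕ) : Polynomial ℝ := Polynomial.Chebyshev.T ℝ n

/-- The `n`-th Chebyshev coefficient `α_n[f] = (2/π)·∫_{−1}^{1} f(t)·T_n(t)/√(1−t²) dt`. -/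
noncomputable def chebCoeff (f : ℝ → ℝ) (n : ℕ) : ℝ :=
  (2 / Real.pi) * ∫ t in (-1:ℝ)..1, f t * (chebT n).eval t / Real.sqrt (1 - t ^ 2)

/-- `f` satisfies condition BV(r) on `[−1,1]`: `f ∈ C^{r−1}([−1,1])` and `f^{(r−1)}` is
absolutely continuous with derivative `g = f^{(r)}` of bounded variation. -/
def BVCond (f : ℝ → ℝ) (r : ℕ) : Prop :=
  1 ≤ r ∧ ContDiffOn ℝ (r - 1 : ℕ) f (Set.Icc (-1 : ℝ) 1) ∧
  ∃ g : ℝ → ℝ, BoundedVariationOn g (Set.Icc (-1:ℝ) 1) ∧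
    ∀ x ∈ Set.Icc (-1:ℝ) 1,
      iteratedDerivWithin (r - 1) f (Set.Icc (-1:ℝ) 1) x =
        iteratedDerivWithin (r - 1) f (Set.Icc (-1:ℝ) 1) (-1) + ∫ t in (-1:ℝ)..x, g t

/-- Frobenius norm of a real square matrix. -/
noncomputable def frobNorm {k : ℕ} (X : Matrix (Fin k) (Fin k) ℝ) : ℝ :=
  Real.sqrt (∑ i, ∑ j, (X i j) ^ 2)

/-- Maximum absolute row-sum norm of a real square matrix. -/
noncomputable def rowSumNorm {k : ℕ} (X : Matrix (Fin k) (Fin k) ℝ) : ℝ :=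
  ⨆ i, ∑ j, |X i j|

/-- The `k × k` Jordan block with eigenvalue `lam`. -/
def jordanBlock (lam : ℝ) (k : ℕ) : Matrix (Fin k) (Fin k) ℝ :=
  fun i j => if (j : ℕ) = (i : ℕ) then lam else if (j : ℕ) = (i : ℕ) + 1 then 1 else 0


open Polynomial

lemma cheb_ode (n : ℕ) :
    (1 - X^2) * derivative (derivative (chebT n)) =
      X * derivative (chebT n) - C ((n:ℝ)^2) * chebT n := by
  have f1 := Polynomial.Chebyshev.T_derivative_eq_U (R := ℝ) (n:ℤ)
  have f2 := Polynomial.Chebyshev.add_one_mul_T_eq_poly_in_U (R := ℝ) ((n:ℤ)-1)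
  simp only [sub_add_cancel] at f2
  have f3 : derivative (derivative (Polynomial.Chebyshev.T ℝ (n:ℤ))) =
      ((n:ℤ) : ℝ[X]) * derivative (Polynomial.Chebyshev.U ℝ ((n:ℤ)-1)) := by
    rw [f1]
    simp [derivative_mul]
  have hC : C ((n:ℝ)^2) = ((n:ℤ) : ℝ[X])^2 := by
    push_cast
    simp [C_eq_natCast]
  show (1 - X^2) * derivative (derivative (Polynomial.Chebyshev.T ℝ (n:ℤ))) =
      X * derivative (Polynomial.Chebyshev.T ℝ (n:ℤ)) - C ((n:ℝ)^2) * Polynomial.Chebyshev.T ℝ (n:ℤ)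
  rw [hC, f3, f1]
  linear_combination (norm := (push_cast; ring_nf)) ((n:ℤ):ℝ[X]) * f2

lemma cheb_ode_iter (n : ℕ) : ∀ j : ℕ,
    (1 - X^2) * derivative^[j+2] (chebT n) =
      (2*(j:ℝ[X])+1) * (X * derivative^[j+1] (chebT n)) -
        ((n:ℝ[X])^2 - (j:ℝ[X])^2) * derivative^[j] (chebT n) := by
  intro j
  induction j with
  | zero =>
      have h := cheb_ode n
      have hC : C ((n:ℝ)^2) = (n:ℝ[X])^2 := by simp [map_pow, C_eq_natCast]
      rw [hC] at h
      simpa using h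
  | succ j ih =>
      have h := congrArg derivative ih
      simp only [derivative_mul, derivative_sub, derivative_add, derivative_one, derivative_X,
        derivative_X_pow, derivative_natCast, derivative_ofNat, derivative_pow,
        Nat.succ_eq_add_one, C_eq_natCast, pow_one,
        ← Function.iterate_succ_apply' derivative] at h
      have e1 : j + 1 + 2 = j + 2 + 1 := rfl
      have e2 : j + 1 + 1 = j + 1 + 1 := rfl
      rw [e1]
      push_cast
      linear_combination h

lemma chebT_abs_le (n : ℕ) (x : ℝ) (hx : x ∈ Set.Icc (-1:ℝ) 1) : |(chebT n).eval x| ≤ 1 := by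
  have h : x = Real.cos (Real.arccos x) := (Real.cos_arccos hx.1 hx.2).symm
  rw [h]
  show |(Polynomial.Chebyshev.T ℝ (n:ℤ)).eval _| ≤ 1
  rw [Polynomial.Chebyshev.T_real_cos]
  exact Real.abs_cos_le_one _

lemma chebT_eval_pm_one (n : ℕ) (x : ℝ) (hx : x = 1 ∨ x = -1) : |(chebT n).eval x| = 1 := by
  rcases hx with h | h <;> subst h
  · have h0 := Polynomial.Chebyshev.T_real_cos (θ := 0) (n := (n:ℤ))
    simp only [Real.cos_zero, mul_zero] at h0
    show |(Polynomial.Chebyshev.T ℝ (n:ℤ)).eval 1| = 1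
    rw [h0]
    simp
  · have h0 := Polynomial.Chebyshev.T_real_cos (θ := Real.pi) (n := (n:ℤ))
    simp only [Real.cos_pi] at h0
    show |(Polynomial.Chebyshev.T ℝ (n:ℤ)).eval (-1)| = 1
    rw [h0]
    exact Real.abs_cos_int_mul_pi _

lemma cheb_endpoint (n : ℕ) : ∀ j : ℕ, j ≤ n → ∀ x : ℝ, (x = 1 ∨ x = -1) →
    |(derivative^[j] (chebT n)).eval x| ≤ (n:ℝ)^(2*j) := by
  intro j
  induction j with
  | zero =>
      intro _ x hx
      simpa using (chebT_eval_pm_one n x hx).le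
  | succ j ih =>
      intro hj x hx
      have hjn : j ≤ n := by omega
      have hb := ih hjn x hx
      have h := congrArg (Polynomial.eval x) (cheb_ode_iter n j)
      have hx2 : x^2 = 1 := by rcases hx with h|h <;> (subst h; norm_num)
      have hxabs : |x| = 1 := by rcases hx with h|h <;> (subst h; norm_num)
      simp only [eval_mul, eval_sub, eval_add, eval_one, eval_pow, eval_X, eval_natCast,
        eval_ofNat, hx2] at h
      set a := (derivative^[j+1] (chebT n)).eval x with ha
      set b := (derivative^[j] (chebT n)).eval x with hb'
      have h' : (2*(j:ℝ)+1) * (x * a) = ((n:ℝ)^2 - (j:ℝ)^2) * b := by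
        linarith [h]
      have hcnn : (0:ℝ) ≤ (n:ℝ)^2 - (j:ℝ)^2 := by
        have : (j:ℝ) ≤ (n:ℝ) := by exact_mod_cast hjn
        nlinarith [Nat.cast_nonneg (α := ℝ) j]
      have habs : (2*(j:ℝ)+1) * |a| = ((n:ℝ)^2 - (j:ℝ)^2) * |b| := by
        have := congrArg abs h'
        rwa [abs_mul, abs_mul, abs_mul, hxabs, one_mul,
          abs_of_nonneg hcnn, abs_of_nonneg (by positivity : (0:ℝ) ≤ 2*(j:ℝ)+1)] at this
      have h1 : |a| ≤ (2*(j:ℝ)+1) * |a| := by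
        nlinarith [abs_nonneg a, Nat.cast_nonneg (α := ℝ) j]
      have h2 : ((n:ℝ)^2 - (j:ℝ)^2) * |b| ≤ (n:ℝ)^2 * (n:ℝ)^(2*j) := by
        apply mul_le_mul _ hb (abs_nonneg b) (by positivity)
        nlinarith [sq_nonneg (j:ℝ)]
      calc |a| ≤ (2*(j:ℝ)+1) * |a| := h1
        _ = ((n:ℝ)^2 - (j:ℝ)^2) * |b| := habs
        _ ≤ (n:ℝ)^2 * (n:ℝ)^(2*j) := h2
        _ = (n:ℝ)^(2*(j+1)) := by rw [← pow_add]; ring_nf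

lemma chebT_natDegree_le (n : ℕ) : (chebT n).natDegree ≤ n := by
  induction n using Nat.strong_induction_on with
  | _ n ih =>
    match n with
    | 0 => simp [chebT, Polynomial.Chebyshev.T_zero]
    | 1 =>
        show (Polynomial.Chebyshev.T ℝ ((1:ℕ):ℤ)).natDegree ≤ 1
        norm_num [Polynomial.Chebyshev.T_one, natDegree_X_le]
    | (m+2) =>
        have h := Polynomial.Chebyshev.T_add_two ℝ (m:ℤ)
        show (Polynomial.Chebyshev.T ℝ ((m+2:ℕ):ℤ)).natDegree ≤ m+2
        rw [show ((m+2:ℕ):ℤ) = (m:ℤ)+2 by push_cast; ring, h]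
        apply le_trans (natDegree_sub_le _ _)
        have h1 : (2 * X * Polynomial.Chebyshev.T ℝ ((m:ℤ)+1)).natDegree ≤ m + 2 := by
          apply le_trans (natDegree_mul_le)
          have : (Polynomial.Chebyshev.T ℝ ((m:ℤ)+1)).natDegree ≤ m + 1 := by
            have := ih (m+1) (by omega)
            simp only [chebT] at this
            rwa [show ((m+1:ℕ):ℤ) = (m:ℤ)+1 by push_cast; ring] at this
          have h2 : (2 * X : ℝ[X]).natDegree ≤ 1 := by
            apply le_trans (natDegree_mul_le)
            simp
          omega
        have h2 : (Polynomial.Chebyshev.T ℝ (m:ℤ)).natDegree ≤ m + 2 := by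
          have := ih m (by omega)
          simp only [chebT] at this
          exact le_trans this (by omega)
        omega

lemma cheb_interior (n j : ℕ) (hj : j < n) :
    ∀ x ∈ Set.Icc (-1:ℝ) 1, |(derivative^[j] (chebT n)).eval x| ≤ (n:ℝ)^(2*j) := by
  have ode := cheb_ode_iter n j
  set Pj := derivative^[j] (chebT n) with hPj
  set Pj1 := derivative^[j+1] (chebT n) with hPj1
  set Pj2 := derivative^[j+2] (chebT n) with hPj2
  set G : ℝ[X] := ((n:ℝ[X])^2 - (j:ℝ[X])^2) * Pj^2 + (1 - X^2) * Pj1^2 with hG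
  have hd1 : derivative Pj = Pj1 := (Function.iterate_succ_apply' _ _ _).symm
  have hd2 : derivative Pj1 = Pj2 := (Function.iterate_succ_apply' _ _ _).symm
  have hG' : derivative G = (4*(j:ℝ[X])) * X * Pj1^2 := by
    rw [hG]
    simp only [derivative_add, derivative_mul, derivative_sub, derivative_one, derivative_X,
      derivative_X_pow, derivative_natCast, derivative_pow, hd1, hd2, derivative_ofNat,
      Nat.succ_eq_add_one, pow_one, C_eq_natCast]
    push_cast
    linear_combination (2 * Pj1) * ode
  set g : ℝ → ℝ := fun x => G.eval x with hg
  have hderiv : ∀ x : ℝ, deriv g x = 4*(j:ℝ) * x * (Pj1.eval x)^2 := by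
    intro x
    rw [hg]
    rw [Polynomial.deriv, hG']
    simp [eval_mul]
  have hcont : Continuous g := by rw [hg]; exact G.continuous_aeval
  have hdiff : Differentiable ℝ g := by rw [hg]; exact G.differentiable_aeval
  have hmono : MonotoneOn g (Set.Icc (0:ℝ) 1) := by
    apply monotoneOn_of_deriv_nonneg (convex_Icc _ _) hcont.continuousOn
      (hdiff.differentiableOn)
    intro x hx
    rw [interior_Icc] at hx
    rw [hderiv]
    have : (0:ℝ) ≤ x := le_of_lt hx.1
    positivity
  have hanti : AntitoneOn g (Set.Icc (-1:ℝ) 0) := by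
    apply antitoneOn_of_deriv_nonpos (convex_Icc _ _) hcont.continuousOn
      (hdiff.differentiableOn)
    intro x hx
    rw [interior_Icc] at hx
    rw [hderiv]
    have hx0 : x ≤ 0 := le_of_lt hx.2
    have h4 : (0:ℝ) ≤ 4*(j:ℝ) * (Pj1.eval x)^2 := by positivity
    nlinarith
  intro x hx
  have hjn : (j:ℝ) < (n:ℝ) := by exact_mod_cast hj
  have hjnn : (0:ℝ) ≤ (j:ℝ) := Nat.cast_nonneg j
  have hpos : (0:ℝ) < (n:ℝ)^2 - (j:ℝ)^2 := by nlinarith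
  have hgend : ∀ y : ℝ, (y = 1 ∨ y = -1) → g y ≤ ((n:ℝ)^2 - (j:ℝ)^2) * ((n:ℝ)^(2*j))^2 := by
    intro y hy
    have hy2 : y^2 = 1 := by rcases hy with h|h <;> (subst h; norm_num)
    have hend := cheb_endpoint n j (le_of_lt hj) y hy
    have : g y = ((n:ℝ)^2 - (j:ℝ)^2) * (Pj.eval y)^2 := by
      rw [hg, hG]
      simp [eval_mul, eval_add, eval_sub, eval_pow, hy2]
    rw [this]
    apply mul_le_mul_of_nonneg_left _ (le_of_lt hpos)
    calc (Pj.eval y)^2 = |Pj.eval y|^2 := (sq_abs _).symm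
      _ ≤ ((n:ℝ)^(2*j))^2 := by
          apply pow_le_pow_left₀ (abs_nonneg _) hend
  have hgx : g x ≤ ((n:ℝ)^2 - (j:ℝ)^2) * ((n:ℝ)^(2*j))^2 := by
    rcases le_or_gt 0 x with h0 | h0
    · exact le_trans (hmono (Set.mem_Icc.mpr ⟨h0, hx.2⟩) (Set.mem_Icc.mpr (by norm_num)) hx.2) (hgend 1 (Or.inl rfl))
    · exact le_trans (hanti (Set.mem_Icc.mpr (by norm_num)) (Set.mem_Icc.mpr ⟨hx.1, le_of_lt h0⟩) hx.1)
        (hgend (-1) (Or.inr rfl))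
  have hlow : ((n:ℝ)^2 - (j:ℝ)^2) * (Pj.eval x)^2 ≤ g x := by
    rw [hg, hG]
    have h1x : (0:ℝ) ≤ 1 - x^2 := by
      rcases hx with ⟨h1, h2⟩; nlinarith
    simp only [eval_add, eval_mul, eval_sub, eval_pow, eval_one, eval_X, eval_natCast]
    nlinarith [sq_nonneg (Pj1.eval x)]
  have hsq : (Pj.eval x)^2 ≤ ((n:ℝ)^(2*j))^2 := by
    nlinarith
  nlinarith [abs_nonneg (Pj.eval x), sq_abs (Pj.eval x), pow_nonneg (Nat.cast_nonneg (α:=ℝ) n) (2*j)]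

lemma cheb_deriv_bound (n j : ℕ) (hn : 1 ≤ n) (x : ℝ) (hx : x ∈ Set.Icc (-1:ℝ) 1) :
    |(derivative^[j] (chebT n)).eval x| ≤ (n:ℝ)^(2*j) := by
  rcases lt_trichotomy j n with h | h | h
  · exact cheb_interior n j h x hx
  · subst h
    have hdeg : (derivative^[j] (chebT j)).natDegree = 0 := by
      have := natDegree_iterate_derivative (chebT j) j
      have h2 := chebT_natDegree_le j
      omega
    have hC := Polynomial.eq_C_of_natDegree_le_zero (le_of_eq hdeg)
    have hsame : (derivative^[j] (chebT j)).eval x = (derivative^[j] (chebT j)).eval 1 := by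
      rw [hC]; simp
    rw [hsame]
    exact cheb_endpoint j j le_rfl 1 (Or.inl rfl)
  · have hz : derivative^[j] (chebT n) = 0 := by
      apply iterate_derivative_eq_zero
      have := chebT_natDegree_le n
      omega
    rw [hz]
    simp

def offDiag (k : ℕ) : Matrix (Fin k) (Fin k) ℝ :=
  fun i j => if (j:ℕ) = (i:ℕ) + 1 then 1 else 0

lemma jordan_eq (lam : ℝ) (k : ℕ) :
    jordanBlock lam k = lam • (1 : Matrix (Fin k) (Fin k) ℝ) + offDiag k := by
  ext i j
  simp only [jordanBlock, offDiag, Matrix.add_apply, Matrix.smul_apply, Matrix.one_apply,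
    smul_eq_mul]
  by_cases h : (j:ℕ) = (i:ℕ)
  · have hij : i = j := Fin.ext h.symm
    subst hij
    simp [h]
  · have hij : ¬ (i = j) := fun hh => h (by rw [hh])
    simp [h, hij]

lemma offDiag_pow (k t : ℕ) (i j : Fin k) :
    ((offDiag k)^t) i j = if (j:ℕ) = (i:ℕ) + t then 1 else 0 := by
  induction t generalizing j with
  | zero =>
      simp only [pow_zero, Matrix.one_apply, add_zero]
      by_cases h : i = j
      · subst h; simp
      · have : ¬ ((j:ℕ) = (i:ℕ)) := fun hh => h (Fin.ext hh.symm)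
        simp [h, this]
  | succ t ih =>
      rw [pow_succ, Matrix.mul_apply]
      by_cases hj : (j:ℕ) = (i:ℕ) + t + 1
      · have hlt : (i:ℕ) + t < k := by have := j.isLt; omega
        rw [if_pos (by omega : (j:ℕ) = (i:ℕ) + (t+1))]
        rw [Finset.sum_eq_single (⟨(i:ℕ) + t, hlt⟩ : Fin k)]
        · rw [ih]
          simp [offDiag, hj]
        · intro l _ hl
          rw [ih]
          by_cases hle : (l:ℕ) = (i:ℕ) + t
          · exact absurd (Fin.ext hle : l = ⟨(i:ℕ)+t, hlt⟩) hl
          · simp [hle]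
        · intro habs
          exact absurd (Finset.mem_univ _) habs
      · rw [if_neg (by omega : ¬ ((j:ℕ) = (i:ℕ) + (t+1)))]
        apply Finset.sum_eq_zero
        intro l _
        rw [ih]
        by_cases hle : (l:ℕ) = (i:ℕ) + t
        · have : ¬ ((j:ℕ) = (l:ℕ) + 1) := by omega
          simp [offDiag, this]
        · simp [hle]

lemma offDiag_pow_zero (k t : ℕ) (ht : k ≤ t) : (offDiag k)^t = 0 := by
  ext i j
  rw [offDiag_pow]
  have := j.isLt
  rw [if_neg (by omega)]
  rfl

lemma offDiag_rowsum (k t : ℕ) (i : Fin k) : ∑ j, |((offDiag k)^t) i j| ≤ 1 := by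
  by_cases h : (i:ℕ) + t < k
  · rw [Finset.sum_eq_single (⟨(i:ℕ)+t, h⟩ : Fin k)]
    · rw [offDiag_pow]; simp
    · intro l _ hl
      rw [offDiag_pow]
      have : ¬ ((l:ℕ) = (i:ℕ) + t) := fun hh => hl (Fin.ext hh)
      simp [this]
    · intro habs; exact absurd (Finset.mem_univ _) habs
  · have : ∀ j : Fin k, |((offDiag k)^t) i j| = 0 := by
      intro j
      rw [offDiag_pow]
      have := j.isLt
      rw [if_neg (by omega)]
      simp
    rw [Finset.sum_congr rfl (fun j _ => this j)]
    simp

lemma jordan_pow (lam : ℝ) (k m : ℕ) :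
    (jordanBlock lam k)^m =
      ∑ t ∈ Finset.range (m+1), ((m.choose t : ℝ) * lam^(m-t)) • (offDiag k)^t := by
  rw [jordan_eq]
  have hcomm : Commute (offDiag k) (lam • (1 : Matrix (Fin k) (Fin k) ℝ)) := by
    apply Commute.smul_right
    exact Commute.one_right _
  rw [add_comm, hcomm.add_pow]
  apply Finset.sum_congr rfl
  intro t _
  rw [_root_.smul_pow, one_pow, mul_smul_comm, mul_one]
  have hc : ((m.choose t : ℕ) : Matrix (Fin k) (Fin k) ℝ) =
      algebraMap ℝ (Matrix (Fin k) (Fin k) ℝ) (m.choose t : ℝ) := by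
    simp [map_natCast]
  rw [hc, smul_mul_assoc, ← Algebra.commutes, ← Algebra.smul_def, smul_smul, mul_comm (lam^(m-t))]

lemma aeval_jordan (lam : ℝ) (k : ℕ) (p : ℝ[X]) :
    Polynomial.aeval (jordanBlock lam k) p =
      ∑ d ∈ Finset.range k, (Polynomial.eval lam (Polynomial.hasseDeriv d p)) • (offDiag k)^d := by
  induction p using Polynomial.induction_on' with
  | add p q hp hq =>
      simp only [map_add, hp, hq, Polynomial.eval_add, add_smul, Finset.sum_add_distrib]
  | monomial m a =>
      rw [Polynomial.aeval_monomial, ← Algebra.smul_def]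
      set c : ℕ → ℝ := fun d => (m.choose d : ℝ) * a * lam^(m-d) with hcdef
      set M0 := max (m+1) k with hM0
      calc a • (jordanBlock lam k)^m
          = ∑ t ∈ Finset.range (m+1), c t • (offDiag k)^t := by
            rw [jordan_pow, Finset.smul_sum]
            exact Finset.sum_congr rfl (fun t _ => by rw [smul_smul, hcdef]; ring_nf)
        _ = ∑ t ∈ Finset.range M0, c t • (offDiag k)^t := by
            apply Finset.sum_subset (Finset.range_subset_range.mpr (le_max_left _ _))
            intro d _ hd
            rw [Finset.mem_range, not_lt] at hd
            have h0 : m.choose d = 0 := Nat.choose_eq_zero_of_lt (by omega)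
            simp [hcdef, h0]
        _ = ∑ d ∈ Finset.range k, c d • (offDiag k)^d := by
            symm
            apply Finset.sum_subset (Finset.range_subset_range.mpr (le_max_right _ _))
            intro d _ hd
            rw [Finset.mem_range, not_lt] at hd
            rw [offDiag_pow_zero k d hd, smul_zero]
        _ = ∑ d ∈ Finset.range k,
              (Polynomial.eval lam (Polynomial.hasseDeriv d (Polynomial.monomial m a))) •
                (offDiag k)^d := by
            apply Finset.sum_congr rfl
            intro d _
            rw [Polynomial.hasseDeriv_monomial, Polynomial.eval_monomial, hcdef]

lemma rowSumNorm_le_sum (k : ℕ) (hk : 1 ≤ k) (c : ℕ → ℝ) :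
    rowSumNorm (∑ d ∈ Finset.range k, c d • (offDiag k)^d) ≤ ∑ d ∈ Finset.range k, |c d| := by
  have : Nonempty (Fin k) := ⟨⟨0, by omega⟩⟩
  apply ciSup_le
  intro i
  calc ∑ j, |(∑ d ∈ Finset.range k, c d • (offDiag k)^d) i j|
      = ∑ j, |∑ d ∈ Finset.range k, c d * ((offDiag k)^d) i j| := by
        apply Finset.sum_congr rfl
        intro j _
        congr 1
        rw [Matrix.sum_apply]
        exact Finset.sum_congr rfl (fun d _ => rfl)
    _ ≤ ∑ j, ∑ d ∈ Finset.range k, |c d * ((offDiag k)^d) i j| := by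
        apply Finset.sum_le_sum
        intro j _
        exact Finset.abs_sum_le_sum_abs _ _
    _ = ∑ d ∈ Finset.range k, ∑ j, |c d| * |((offDiag k)^d) i j| := by
        rw [Finset.sum_comm]
        exact Finset.sum_congr rfl (fun d _ => Finset.sum_congr rfl (fun j _ => abs_mul _ _))
    _ = ∑ d ∈ Finset.range k, |c d| * (∑ j, |((offDiag k)^d) i j|) := by
        exact Finset.sum_congr rfl (fun d _ => (Finset.mul_sum _ _ _).symm)
    _ ≤ ∑ d ∈ Finset.range k, |c d| * 1 := by
        apply Finset.sum_le_sum
        intro d _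
        exact mul_le_mul_of_nonneg_left (offDiag_rowsum k d i) (abs_nonneg _)
    _ = ∑ d ∈ Finset.range k, |c d| := by simp

lemma two_pow_le_factorial_succ (d : ℕ) : 2^d ≤ (d+1).factorial := by
  induction d with
  | zero => simp
  | succ d ih =>
      rw [pow_succ, Nat.factorial_succ]
      calc 2^d * 2 ≤ (d+1).factorial * 2 := Nat.mul_le_mul_right 2 ih
        _ ≤ (d+1+1) * (d+1).factorial := by nlinarith [Nat.factorial_pos (d+1)]

lemma sum_inv_factorial_le (k : ℕ) : ∑ d ∈ Finset.range k, (1 / (d.factorial : ℝ)) ≤ 3 := by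
  have key : ∀ m : ℕ, ∑ d ∈ Finset.range (m+1), (1 / (d.factorial : ℝ)) ≤ 3 - 2 * (1/2)^m := by
    intro m
    induction m with
    | zero => simp; norm_num
    | succ m ih =>
        rw [Finset.sum_range_succ]
        have h1 : (1 / (((m+1).factorial : ℕ) : ℝ)) ≤ (1/2)^m := by
          have h2 : (2:ℝ)^m ≤ (((m+1).factorial : ℕ) : ℝ) := by
            exact_mod_cast two_pow_le_factorial_succ m
          have h3 : (0:ℝ) < 2^m := by positivity
          rw [div_pow, one_pow, div_le_div_iff₀ (by positivity) h3, one_mul]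
          linarith
        calc ∑ d ∈ Finset.range (m+1), (1 / (d.factorial : ℝ)) + 1/(((m+1).factorial : ℕ) : ℝ)
            ≤ (3 - 2 * (1/2)^m) + (1/2)^m := add_le_add ih h1
          _ = 3 - 2 * (1/2)^(m+1) := by ring
  match k with
  | 0 => simp
  | (m+1) =>
      calc ∑ d ∈ Finset.range (m+1), (1 / (d.factorial : ℝ)) ≤ 3 - 2*(1/2)^m := key m
        _ ≤ 3 := by
            have : (0:ℝ) ≤ 2*(1/2)^m := by positivity
            linarith

/-- row-sum norm bound for a Chebyshev polynomial of a Jordan block. -/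
theorem stmt4 (lam : ℝ) (hlam : lam ∈ Set.Icc (-1:ℝ) 1) (k : ℕ) (hk : 1 ≤ k)
    (n : ℕ) (hn : 1 ≤ n) :
    rowSumNorm (Polynomial.aeval (jordanBlock lam k) (chebT n)) ≤
      3 * (n : ℝ) ^ (2 * k - 2) := by
  rw [aeval_jordan]
  apply le_trans (rowSumNorm_le_sum k hk _)
  have hterm : ∀ d ∈ Finset.range k,
      |Polynomial.eval lam (Polynomial.hasseDeriv d (chebT n))| ≤
        (n:ℝ)^(2*k-2) * (1 / (d.factorial : ℝ)) := by
    intro d hd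
    rw [Finset.mem_range] at hd
    have hfact := Polynomial.factorial_smul_hasseDeriv (R := ℝ) d
    have heq : derivative^[d] (chebT n) = d.factorial • (Polynomial.hasseDeriv d (chebT n)) := by
      rw [← hfact]; rfl
    have heval : (derivative^[d] (chebT n)).eval lam =
        (d.factorial : ℝ) * (Polynomial.hasseDeriv d (chebT n)).eval lam := by
      rw [heq, nsmul_eq_mul]
      push_cast
      rw [Polynomial.eval_mul, Polynomial.eval_natCast]
    have hbd := cheb_deriv_bound n d hn lam hlam
    have hfpos : (0:ℝ) < (d.factorial : ℝ) := by exact_mod_cast Nat.factorial_pos d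
    have habs : |Polynomial.eval lam (Polynomial.hasseDeriv d (chebT n))| =
        |(derivative^[d] (chebT n)).eval lam| / (d.factorial : ℝ) := by
      rw [heval, abs_mul, abs_of_pos hfpos]
      field_simp
    rw [habs, div_le_iff₀ hfpos]
    have hpow : (n:ℝ)^(2*d) ≤ (n:ℝ)^(2*k-2) := by
      apply pow_le_pow_right₀ (by exact_mod_cast hn)
      omega
    calc |(derivative^[d] (chebT n)).eval lam| ≤ (n:ℝ)^(2*d) := hbd
      _ ≤ (n:ℝ)^(2*k-2) := hpow
      _ = (n:ℝ)^(2*k-2) * (1 / (d.factorial : ℝ)) * (d.factorial : ℝ) := by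
          field_simp
  calc ∑ d ∈ Finset.range k, |Polynomial.eval lam (Polynomial.hasseDeriv d (chebT n))|
      ≤ ∑ d ∈ Finset.range k, (n:ℝ)^(2*k-2) * (1 / (d.factorial : ℝ)) :=
        Finset.sum_le_sum hterm
    _ = (n:ℝ)^(2*k-2) * ∑ d ∈ Finset.range k, (1 / (d.factorial : ℝ)) := by
        rw [Finset.mul_sum]
    _ ≤ (n:ℝ)^(2*k-2) * 3 := by
        apply mul_le_mul_of_nonneg_left (sum_inv_factorial_le k) (by positivity)
    _ = 3 * (n:ℝ)^(2*k-2) := by ring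
end

section
/- Let A be a k×k real matrix with a Jordan form A = Z⁻¹·diag(J(λ_1,k_1),…,J(λ_p,k_p))·Z in which every eigenvalue λ_i lies in [−1,1] and every block size k_i is at most m. Then for every n ≥ 1, ‖T_n(A)‖₁ ≤ 3·‖Z⁻¹‖₁·‖Z‖₁·n^{2m−2}. -/
/-!
Conjugation and block decomposition reduce the estimate to a single Jordan block
`J = λ + N` with `N` the nilpotent shift, on which `T_n(J) = ∑_{j<s} c_j N^j` where the `c_j` are
the Taylor coefficients of `T_n` at `λ`. The iterated derivatives of `T_n` are nonnegative integer
combinations of Chebyshev polynomials, so on `[-1, 1]` they are dominated by their value at `1`;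
the recurrence `(2j + 1) T_n^{(j+1)}(1) = (n² - j²) T_n^{(j)}(1)` bounds that value by `n^{2j}`.
Hence `|c_j| ≤ n^{2j} / j!` and the row sums of `T_n(J)` are at most `e · n^{2m-2}`.
-/

open Polynomial

namespace Polynomial.Chebyshev

theorem abs_eval_le_eval_one_of_mem_span_T {q : ℝ[X]}
    (hq : q ∈ Submodule.span ℕ (Set.range fun j : ℕ => T ℝ j)) {x : ℝ} (hx : |x| ≤ 1) :
    |q.eval x| ≤ q.eval 1 := by
  induction hq using Submodule.span_induction with
  | mem _ h =>
    obtain ⟨j, rfl⟩ := h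
    simpa [T_eval_one] using abs_eval_T_real_le_one j hx
  | zero => simp
  | add p q _ _ hp hq =>
    simpa only [eval_add] using (abs_add_le _ _).trans (add_le_add hp hq)
  | smul c q _ hq =>
    simpa [nsmul_eq_mul, abs_mul] using mul_le_mul_of_nonneg_left hq c.cast_nonneg

theorem abs_eval_iterate_derivative_T_le (n k : ℕ) {x : ℝ} (hx : |x| ≤ 1) :
    |(derivative^[k] (T ℝ n)).eval x| ≤ (derivative^[k] (T ℝ n)).eval 1 :=
  abs_eval_le_eval_one_of_mem_span_T
    (Submodule.span_mono (Set.image_subset_range _ _)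
      (T_iterate_derivative_mem_span_T (R := ℝ) n k)) hx

theorem iterate_derivative_T_eval_one_nonneg (n k : ℕ) :
    0 ≤ (derivative^[k] (T ℝ n)).eval 1 :=
  (abs_nonneg _).trans (abs_eval_iterate_derivative_T_le n k abs_one.le)

theorem iterate_derivative_T_eval_one_le (n k : ℕ) :
    (derivative^[k] (T ℝ n)).eval 1 ≤ (n : ℝ) ^ (2 * k) := by
  induction k with
  | zero => simp [T_eval_one]
  | succ k ih =>
    have hrec := iterate_derivative_T_eval_one_recurrence (R := ℝ) n k
    have hk := iterate_derivative_T_eval_one_nonneg n k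
    have hk1 := iterate_derivative_T_eval_one_nonneg n (k + 1)
    push_cast at hrec
    rw [Nat.mul_succ, pow_add]
    nlinarith [sq_nonneg (k : ℝ), mul_le_mul_of_nonneg_left ih (sq_nonneg (n : ℝ))]

theorem abs_taylor_coeff_T_le (n j : ℕ) {x : ℝ} (hx : |x| ≤ 1) :
    |(taylor x (T ℝ n)).coeff j| ≤ (n : ℝ) ^ (2 * j) / j.factorial := by
  have h := congr_fun (factorial_smul_hasseDeriv (R := ℝ) j) (T ℝ n)
  rw [LinearMap.smul_apply, nsmul_eq_mul] at h
  rw [taylor_coeff, le_div_iff₀ (by positivity),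
    ← abs_of_pos (a := (j.factorial : ℝ)) (by positivity), ← abs_mul, mul_comm,
    ← eval_natCast_mul, h]
  exact (abs_eval_iterate_derivative_T_le n j hx).trans (iterate_derivative_T_eval_one_le n j)

end Polynomial.Chebyshev

theorem Polynomial.aeval_units_conj {R A : Type*} [CommSemiring R] [Semiring A] [Algebra R A]
    (u : Aˣ) (x : A) (p : R[X]) : aeval (↑u * x * ↑u⁻¹) p = ↑u * aeval x p * ↑u⁻¹ := by
  simpa [ConjAct.units_smul_def] using
    aeval_algHom_apply (MulSemiringAction.toAlgEquiv R A (ConjAct.toConjAct u)) x p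

theorem Real.sum_range_pow_div_factorial_le {x : ℝ} (hx : 1 ≤ x) (m : ℕ) :
    ∑ j ∈ Finset.range m, x ^ j / j.factorial ≤ 3 * x ^ (m - 1) := by
  have hexp : ∑ j ∈ Finset.range m, (1 : ℝ) ^ j / j.factorial ≤ 3 :=
    (Real.sum_le_exp_of_nonneg zero_le_one m).trans
      (Real.exp_one_lt_d9.le.trans (by norm_num))
  calc ∑ j ∈ Finset.range m, x ^ j / j.factorial
      ≤ ∑ j ∈ Finset.range m, x ^ (m - 1) * ((1 : ℝ) ^ j / j.factorial) := by
        gcongr with j hj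
        rw [one_pow, mul_one_div]
        gcongr
        exact Nat.le_sub_one_of_lt (Finset.mem_range.mp hj)
    _ ≤ x ^ (m - 1) * 3 := by
        rw [← Finset.mul_sum]
        gcongr
    _ = 3 * x ^ (m - 1) := mul_comm _ _

attribute [local instance] Matrix.linftyOpSeminormedAddCommGroup Matrix.linftyOpNormedSpace
  Matrix.linftyOpNormedRing Matrix.linftyOpNormedAlgebra

namespace Matrix

section LinftyOpNorm

variable {α : Type*} [SeminormedAddCommGroup α]

theorem linfty_opNorm_le_iff {m n : Type*} [Fintype m] [Fintype n] {A : Matrix m n α} {C : ℝ}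
    (hC : 0 ≤ C) : ‖A‖ ≤ C ↔ ∀ i, ∑ j, ‖A i j‖ ≤ C := by
  lift C to NNReal using hC
  rw [linfty_opNorm_def, NNReal.coe_le_coe, Finset.sup_le_iff]
  simp only [Finset.mem_univ, true_implies, ← NNReal.coe_le_coe, NNReal.coe_sum, coe_nnnorm]

theorem linfty_opNorm_reindex_le {m n m' n' : Type*} [Fintype m] [Fintype n] [Fintype m']
    [Fintype n'] (e : m ≃ m') (f : n ≃ n') (A : Matrix m n α) : ‖reindex e f A‖ ≤ ‖A‖ :=
  (linfty_opNorm_le_iff (norm_nonneg A)).2 fun i => by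
    simpa [Equiv.sum_comp f.symm (fun j => ‖A (e.symm i) j‖)] using
      (linfty_opNorm_le_iff (norm_nonneg A)).1 le_rfl (e.symm i)

theorem linfty_opNorm_blockDiagonal'_le {o : Type*} [Fintype o] [DecidableEq o]
    {m' n' : o → Type*} [∀ i, Fintype (m' i)] [∀ i, Fintype (n' i)]
    {M : ∀ i, Matrix (m' i) (n' i) α} {C : ℝ} (hC : 0 ≤ C) (hM : ∀ i, ‖M i‖ ≤ C) :
    ‖blockDiagonal' M‖ ≤ C := by
  refine (linfty_opNorm_le_iff hC).2 fun ⟨i, a⟩ => ?_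
  rw [← Finset.univ_sigma_univ, Finset.sum_sigma, Finset.sum_eq_single i]
  · simpa [blockDiagonal'_apply_eq] using (linfty_opNorm_le_iff hC).1 (hM i) a
  · intro i' _ hi'
    simp [blockDiagonal'_apply_ne _ _ _ hi'.symm]
  · simp

end LinftyOpNorm

section FunctionalCalculus

variable {R : Type*} [CommSemiring R]

theorem aeval_reindex {m n : Type*} [Fintype m] [Fintype n] [DecidableEq m] [DecidableEq n]
    (e : m ≃ n) (A : Matrix m m R) (p : R[X]) :
    aeval (reindex e e A) p = reindex e e (aeval A p) :=
  aeval_algHom_apply (reindexAlgEquiv R R e) A p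

theorem aeval_blockDiagonal' {o : Type*} [Fintype o] [DecidableEq o] {m' : o → Type*}
    [∀ i, Fintype (m' i)] [∀ i, DecidableEq (m' i)] (M : ∀ i, Matrix (m' i) (m' i) R)
    (p : R[X]) : aeval (blockDiagonal' M) p = blockDiagonal' fun i => aeval (M i) p := by
  induction p using Polynomial.induction_on' with
  | add p q hp hq => simp only [map_add, hp, hq, ← blockDiagonal'_add]; rfl
  | monomial n a =>
    simp only [aeval_monomial, Algebra.algebraMap_eq_smul_one, smul_mul_assoc, one_mul,
      ← blockDiagonal'_pow, ← blockDiagonal'_smul]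
    rfl

end FunctionalCalculus

def shiftMatrix (R : Type*) [Zero R] [One R] (s : ℕ) : Matrix (Fin s) (Fin s) R :=
  of fun a b => if (b : ℕ) = a + 1 then 1 else 0

section ShiftMatrix

variable {R : Type*} [Semiring R]

theorem shiftMatrix_apply (s : ℕ) (a b : Fin s) :
    shiftMatrix R s a b = if (b : ℕ) = a + 1 then 1 else 0 := rfl

theorem shiftMatrix_pow_apply (s d : ℕ) (a b : Fin s) :
    (shiftMatrix R s ^ d) a b = if (b : ℕ) = a + d then 1 else 0 := by
  induction d generalizing b with
  | zero => simp [one_apply, Fin.ext_iff, eq_comm]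
  | succ d ih =>
    rw [pow_succ, mul_apply]
    simp only [ih, shiftMatrix_apply, ite_mul, one_mul, zero_mul]
    rw [Fin.sum_univ_eq_sum_range (fun c => if c = (a : ℕ) + d then
      (if (b : ℕ) = c + 1 then (1 : R) else 0) else 0), Finset.sum_ite_eq']
    have := b.isLt
    split_ifs <;> simp_all only [Finset.mem_range] <;> omega

theorem shiftMatrix_pow_eq_zero {s d : ℕ} (h : s ≤ d) : shiftMatrix R s ^ d = 0 := by
  ext a b
  rw [shiftMatrix_pow_apply, if_neg (by omega), zero_apply]

end ShiftMatrix

theorem norm_shiftMatrix_pow_le_one (s d : ℕ) : ‖shiftMatrix ℝ s ^ d‖ ≤ 1 :=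
  (linfty_opNorm_le_iff zero_le_one).2 fun a => by
    simp only [shiftMatrix_pow_apply, apply_ite norm, norm_one, norm_zero]
    rw [Fin.sum_univ_eq_sum_range (fun b => if b = (a : ℕ) + d then (1 : ℝ) else 0),
      Finset.sum_ite_eq']
    split_ifs <;> norm_num

end Matrix

open Matrix

theorem jordanBlock_eq_add_shiftMatrix (lam : ℝ) (s : ℕ) :
    jordanBlock lam s = algebraMap ℝ _ lam + shiftMatrix ℝ s := by
  ext a b
  simp only [jordanBlock, shiftMatrix_apply, Matrix.add_apply, algebraMap_matrix_apply, Fin.ext_iff]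
  split_ifs <;> first | omega | simp

theorem aeval_jordanBlock (lam : ℝ) (s : ℕ) (q : ℝ[X]) :
    aeval (jordanBlock lam s) q =
      ∑ j ∈ Finset.range s, (taylor lam q).coeff j • shiftMatrix ℝ s ^ j := by
  have hN : aeval (jordanBlock lam s) (X - C lam) = shiftMatrix ℝ s := by
    rw [map_sub, aeval_X, aeval_C, jordanBlock_eq_add_shiftMatrix, add_sub_cancel_left]
  have hq : (taylor lam q).comp (X - C lam) = q := by
    rw [taylor_apply, comp_assoc, add_comp, X_comp, C_comp, sub_add_cancel, comp_X]
  conv_lhs => rw [← hq]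
  rw [aeval_comp, hN,
    aeval_eq_sum_range' (n := s + (q.natDegree + 1)) (by rw [natDegree_taylor]; omega),
    Finset.sum_range_add, add_eq_left]
  exact Finset.sum_eq_zero fun j _ => by rw [shiftMatrix_pow_eq_zero (by omega), smul_zero]

theorem norm_aeval_jordanBlock_le (lam : ℝ) (s : ℕ) (q : ℝ[X]) :
    ‖aeval (jordanBlock lam s) q‖ ≤ ∑ j ∈ Finset.range s, |(taylor lam q).coeff j| := by
  rw [aeval_jordanBlock]
  refine (norm_sum_le _ _).trans (Finset.sum_le_sum fun j _ => ?_)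
  rw [norm_smul, Real.norm_eq_abs]
  exact mul_le_of_le_one_right (abs_nonneg _) (norm_shiftMatrix_pow_le_one s j)

theorem norm_aeval_jordanBlock_chebT_le {lam : ℝ} (hlam : |lam| ≤ 1) {s m : ℕ} (hs : s ≤ m)
    {n : ℕ} (hn : 1 ≤ n) :
    ‖aeval (jordanBlock lam s) (chebT n)‖ ≤ 3 * (n : ℝ) ^ (2 * m - 2) :=
  calc ‖aeval (jordanBlock lam s) (chebT n)‖
      ≤ ∑ j ∈ Finset.range s, |(taylor lam (chebT n)).coeff j| := norm_aeval_jordanBlock_le ..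
    _ ≤ ∑ j ∈ Finset.range m, |(taylor lam (chebT n)).coeff j| :=
        Finset.sum_le_sum_of_subset_of_nonneg (Finset.range_mono hs) fun _ _ _ => abs_nonneg _
    _ ≤ ∑ j ∈ Finset.range m, ((n : ℝ) ^ 2) ^ j / j.factorial :=
        Finset.sum_le_sum fun j _ => by rw [← pow_mul]; exact Chebyshev.abs_taylor_coeff_T_le n j hlam
    _ ≤ 3 * ((n : ℝ) ^ 2) ^ (m - 1) :=
        Real.sum_range_pow_div_factorial_le (one_le_pow₀ (by exact_mod_cast hn)) m
    _ = 3 * (n : ℝ) ^ (2 * m - 2) := by rw [← pow_mul, Nat.mul_sub_one]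

theorem rowSumNorm_eq_norm {k : ℕ} (X : Matrix (Fin k) (Fin k) ℝ) : rowSumNorm X = ‖X‖ := by
  have hrow := (linfty_opNorm_le_iff (norm_nonneg X)).1 le_rfl
  simp only [Real.norm_eq_abs] at hrow
  refine le_antisymm (Real.iSup_le hrow (norm_nonneg X)) ?_
  refine (linfty_opNorm_le_iff (Real.iSup_nonneg fun i => ?_)).2 fun i => ?_
  · exact Finset.sum_nonneg fun j _ => abs_nonneg _
  · simpa only [Real.norm_eq_abs] using
      le_ciSup (f := fun i => ∑ j, |X i j|) (Set.finite_range _).bddAbove i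

/-- row-sum norm bound `‖T_n(A)‖₁ ≤ 3‖Z⁻¹‖₁‖Z‖₁ n^{2m−2}` for a matrix with
Jordan blocks of size at most `m` and eigenvalues in `[−1,1]`. -/
theorem stmt5 (k p m : ℕ) (ks : Fin p → ℕ) (lam : Fin p → ℝ)
    (hlam : ∀ i, lam i ∈ Set.Icc (-1:ℝ) 1) (hks : ∀ i, ks i ≤ m)
    (e : (Σ i : Fin p, Fin (ks i)) ≃ Fin k)
    (Z A : Matrix (Fin k) (Fin k) ℝ) (hZ : IsUnit Z.det)
    (hA : A = Z⁻¹ *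
      (Matrix.reindex e e (Matrix.blockDiagonal' fun i => jordanBlock (lam i) (ks i))) * Z)
    (n : ℕ) (hn : 1 ≤ n) :
    rowSumNorm (Polynomial.aeval A (chebT n)) ≤
      3 * rowSumNorm Z⁻¹ * rowSumNorm Z * (n : ℝ) ^ (2 * m - 2) := by
  set B := reindex e e (blockDiagonal' fun i => aeval (jordanBlock (lam i) (ks i)) (chebT n))
    with hB_def
  have hconj : aeval A (chebT n) = Z⁻¹ * B * Z := by
    rw [hA, hB_def, ← aeval_blockDiagonal', ← aeval_reindex]
    -- the unit `(nonsingInvUnit Z hZ)⁻¹` has underlying matrix `Z⁻¹` and inverse `Z` by definition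
    exact aeval_units_conj (nonsingInvUnit Z hZ)⁻¹ _ _
  have hB : ‖B‖ ≤ 3 * (n : ℝ) ^ (2 * m - 2) :=
    (linfty_opNorm_reindex_le e e _).trans <| linfty_opNorm_blockDiagonal'_le (by positivity)
      fun i => norm_aeval_jordanBlock_chebT_le (abs_le.2 (hlam i)) (hks i) hn
  rw [rowSumNorm_eq_norm, rowSumNorm_eq_norm, rowSumNorm_eq_norm, hconj]
  calc ‖Z⁻¹ * B * Z‖ ≤ ‖Z⁻¹‖ * ‖B‖ * ‖Z‖ := norm_mul₃_le
    _ ≤ ‖Z⁻¹‖ * (3 * (n : ℝ) ^ (2 * m - 2)) * ‖Z‖ := by gcongr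
    _ = 3 * ‖Z⁻¹‖ * ‖Z‖ * (n : ℝ) ^ (2 * m - 2) := by ring
end
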